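/- arXiv:2407.16809 — 6 statements merged into one kernel-verified Lean document; each statement's English description precedes it below -/
import Mathlib

section
/- For every natural number n, the sum over k from 0 to n of binom(2n, 2k) * Catalan(k) * Catalan(n-k) equals Catalan(n) * Catalan(n+1). -/
open Nat Finset

private lemma cat_cast (m : ℕ) : (catalan m : ℚ) = ((2 * m).choose m : ℚ) / (m + 1) := by
  rw [eq_div_iff (by positivity), mul_comm]
  have h : (m + 1) * catalan m = (2 * m).choose m := succ_mul_catalan_eq_centralBinom m
  exact_mod_cast h

private lemma term_eq (n k : ℕ) (h : k ≤ n) :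
    (n + 1)! * (n + 1)! * ((2 * n).choose (2 * k) * catalan k * catalan (n - k))
      = (2 * n)! * ((n + 1).choose k * (n + 1).choose (k + 1)) := by
  obtain ⟨m, rfl⟩ : ∃ m, n = k + m := ⟨n - k, by omega⟩
  have hs : k + m - k = m := by omega
  rw [hs]
  apply Nat.cast_injective (R := ℚ)
  have c1 := Nat.cast_choose ℚ (show 2 * k ≤ 2 * (k + m) by omega)
  have c2 := Nat.cast_choose ℚ (show k ≤ k + m + 1 by omega)
  have c3 := Nat.cast_choose ℚ (show k + 1 ≤ k + m + 1 by omega)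
  have c4 := Nat.cast_choose ℚ (show k ≤ 2 * k by omega)
  have c5 := Nat.cast_choose ℚ (show m ≤ 2 * m by omega)
  have d1 : 2 * (k + m) - 2 * k = 2 * m := by omega
  have d2 : k + m + 1 - k = m + 1 := by omega
  have d3 : k + m + 1 - (k + 1) = m := by omega
  have d4 : 2 * k - k = k := by omega
  have d5 : 2 * m - m = m := by omega
  rw [d1] at c1; rw [d2] at c2; rw [d3] at c3; rw [d4] at c4; rw [d5] at c5
  push_cast [cat_cast, c1, c2, c3, c4, c5, d4, d5, Nat.factorial_succ m, Nat.factorial_succ k]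
  have hk : ((k)! : ℚ) ≠ 0 := by exact_mod_cast Nat.factorial_ne_zero k
  have hm : ((m)! : ℚ) ≠ 0 := by exact_mod_cast Nat.factorial_ne_zero m
  have h2k : (((2 * k))! : ℚ) ≠ 0 := by exact_mod_cast Nat.factorial_ne_zero (2 * k)
  have h2m : (((2 * m))! : ℚ) ≠ 0 := by exact_mod_cast Nat.factorial_ne_zero (2 * m)
  have hk1 : ((k : ℚ) + 1) ≠ 0 := by positivity
  have hm1 : ((m : ℚ) + 1) ≠ 0 := by positivity
  field_simp

private lemma rhs_eq (n : ℕ) :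
    (n + 1)! * (n + 1)! * (catalan n * catalan (n + 1))
      = (2 * n)! * (2 * n + 2).choose n := by
  apply Nat.cast_injective (R := ℚ)
  push_cast [cat_cast, Nat.cast_choose ℚ (show n ≤ 2 * n by omega),
    Nat.cast_choose ℚ (show n + 1 ≤ 2 * (n + 1) by omega),
    Nat.cast_choose ℚ (show n ≤ 2 * n + 2 by omega)]
  have e1 : 2 * n - n = n := by omega
  have e2 : 2 * (n + 1) - (n + 1) = n + 1 := by omega
  have e3 : 2 * n + 2 - n = n + 2 := by omega
  have e4 : 2 * (n + 1) = 2 * n + 2 := by omega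
  rw [e1, e2, e3, e4]
  have r1 : ((2 * n + 2)! : ℚ) = (2 * n + 2) * ((2 * n + 1) * (2 * n)!) := by
    rw [show (2*n+2)! = (2*n+2) * (2*n+1)! from Nat.factorial_succ (2*n+1),
      show (2*n+1)! = (2*n+1) * (2*n)! from Nat.factorial_succ (2*n)]
    push_cast; ring
  have r2 : ((n + 2)! : ℚ) = (n + 2) * (n + 1)! := by
    rw [show (n+2)! = (n+2) * (n+1)! from Nat.factorial_succ (n+1)]; push_cast; ring
  have r3 : ((n + 1)! : ℚ) = (n + 1) * n ! := by
    rw [Nat.factorial_succ]; push_cast; ring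
  rw [r1, r2, r3]
  have hn : ((n)! : ℚ) ≠ 0 := by exact_mod_cast Nat.factorial_ne_zero n
  have h2n : (((2 * n))! : ℚ) ≠ 0 := by exact_mod_cast Nat.factorial_ne_zero (2 * n)
  have hn1 : ((n : ℚ) + 1) ≠ 0 := by positivity
  have hn2 : ((n : ℚ) + 2) ≠ 0 := by positivity
  field_simp
  ring

private lemma vandermonde_sum (n : ℕ) :
    ∑ k ∈ Finset.range (n + 1), (n + 1).choose k * (n + 1).choose (k + 1)
      = (2 * n + 2).choose n := by
  have := Nat.add_choose_eq (n + 1) (n + 1) n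
  rw [Finset.Nat.sum_antidiagonal_eq_sum_range_succ_mk] at this
  rw [show 2 * n + 2 = n + 1 + (n + 1) by omega, this]
  refine Finset.sum_congr rfl fun k hk => ?_
  have hk' : k ≤ n := by simpa using Nat.lt_succ_iff.mp (Finset.mem_range.mp hk)
  have : (n + 1).choose (n - k) = (n + 1).choose (k + 1) := by
    rw [show n - k = n + 1 - (k + 1) by omega, Nat.choose_symm (by omega)]
  simp [this]

theorem mullin_formula (n : ℕ) :
    ∑ k ∈ Finset.range (n + 1),
      Nat.choose (2 * n) (2 * k) * catalan k * catalan (n - k)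
    = catalan n * catalan (n + 1) := by
  have key : (n + 1)! * (n + 1)! *
      (∑ k ∈ Finset.range (n + 1),
        Nat.choose (2 * n) (2 * k) * catalan k * catalan (n - k))
      = (n + 1)! * (n + 1)! * (catalan n * catalan (n + 1)) := by
    rw [Finset.mul_sum, rhs_eq]
    calc ∑ k ∈ Finset.range (n + 1),
          (n + 1)! * (n + 1)! * ((2 * n).choose (2 * k) * catalan k * catalan (n - k))
        = ∑ k ∈ Finset.range (n + 1), (2 * n)! * ((n + 1).choose k * (n + 1).choose (k + 1)) := by
          refine Finset.sum_congr rfl fun k hk => ?_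
          exact term_eq n k (Nat.lt_succ_iff.mp (Finset.mem_range.mp hk))
      _ = (2 * n)! * (2 * n + 2).choose n := by
          rw [← Finset.mul_sum, vandermonde_sum]
  exact Nat.eq_of_mul_eq_mul_left (Nat.mul_pos (Nat.factorial_pos _) (Nat.factorial_pos _)) key
end

section
/- The formal power series M(z) = ∑_{n≥0} Catalan(n) * Catalan(n+1) * z^n satisfies the linear differential equation z^2(16z-1) M'''(z) + 6z(16z-1) M''(z) + 6(18z-1) M'(z) + 12 M(z) = 0. -/
open PowerSeries

noncomputable def Mseries : PowerSeries ℚ :=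
  PowerSeries.mk fun n => (catalan n * catalan (n + 1) : ℚ)

-- key catalan recurrence over ℚ
lemma catalan_rec (n : ℕ) :
    ((n : ℚ) + 2) * catalan (n + 1) = 2 * (2 * n + 1) * catalan n := by
  have h1 : ((n : ℚ) + 1) * catalan n = Nat.centralBinom n := by
    exact_mod_cast congrArg (Nat.cast : ℕ → ℚ) (succ_mul_catalan_eq_centralBinom n)
  have h2 : ((n : ℚ) + 2) * catalan (n + 1) = Nat.centralBinom (n + 1) := by
    have := congrArg (Nat.cast : ℕ → ℚ) (succ_mul_catalan_eq_centralBinom (n + 1))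
    push_cast at this ⊢
    linarith [this]
  have h3 : ((n : ℚ) + 1) * Nat.centralBinom (n + 1)
      = 2 * (2 * n + 1) * Nat.centralBinom n := by
    have := congrArg (Nat.cast : ℕ → ℚ) (Nat.succ_mul_centralBinom_succ n)
    push_cast at this ⊢
    linarith [this]
  have hne : ((n : ℚ) + 1) ≠ 0 := by positivity
  apply mul_left_cancel₀ hne
  linear_combination ((n : ℚ) + 1) * h2 + h3 - 2 * (2 * (n : ℚ) + 1) * h1

theorem Mseries_DFinite :
    (X ^ 2 * (16 * X - 1)) * (d⁄dX ℚ (d⁄dX ℚ (d⁄dX ℚ Mseries)))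
      + (6 * X * (16 * X - 1)) * (d⁄dX ℚ (d⁄dX ℚ Mseries))
      + (6 * (18 * X - 1)) * (d⁄dX ℚ Mseries)
      + 12 * Mseries = 0 := by
  set F1 := d⁄dX ℚ Mseries with hF1
  set F2 := d⁄dX ℚ F1 with hF2
  set F3 := d⁄dX ℚ F2 with hF3
  have hexp : (X ^ 2 * (16 * X - 1)) * F3 + (6 * X * (16 * X - 1)) * F2
      + (6 * (18 * X - 1)) * F1 + 12 * Mseries
      = (16 : ℚ) • (X ^ 3 * F3) - X ^ 2 * F3 + (96 : ℚ) • (X ^ 2 * F2)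
        - (6 : ℚ) • (X ^ 1 * F2) + (108 : ℚ) • (X ^ 1 * F1) - (6 : ℚ) • F1
        + (12 : ℚ) • Mseries := by
    simp only [smul_eq_C_mul, map_ofNat]
    ring
  rw [hexp]
  ext n
  simp only [map_add, map_sub, map_smul, smul_eq_mul, coeff_X_pow_mul',
    coeff_derivative, hF3, hF2, hF1, Mseries, coeff_mk, map_zero]
  rcases n with _ | _ | _ | k
  · norm_num [catalan_two]
  · norm_num [catalan_two, catalan_three]
  · have h := catalan_rec 3
    norm_num [catalan_two, catalan_three] at h ⊢
    linarith
  · have h1 := catalan_rec (k + 1 + 1 + 1)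
    have h2 := catalan_rec (k + 1 + 1 + 1 + 1)
    simp only [Nat.succ_sub_succ_eq_sub, Nat.sub_zero, Nat.add_sub_cancel] at *
    push_cast at h1 h2 ⊢
    linear_combination (-((k:ℚ) + 4) * ((k:ℚ) + 6) * (catalan (k + 1 + 1 + 1 + 1 + 1) : ℚ)) * h1
      + (-2 * (2 * (k:ℚ) + 7) * ((k:ℚ) + 4) * (catalan (k + 1 + 1 + 1) : ℚ)) * h2
end

section
/- The power series M(z) = ∑_{n≥0} Catalan(n)*Catalan(n+1) z^n has radius of convergence 1/16, and its value at z = 1/16 is M(1/16) = 8 - 64/(3π). -/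
/-!
The ratio of consecutive coefficients is `C(n+2) / C(n) → 4 * 4 = 16`, so the ratio test gives
the radius `1/16`. At `z = 1/16` the partial sums telescope (Gosper's algorithm finds the
hypergeometric antidifference): `∑_{n<N} C(n) C(n+1) / 16^n = 8 - T(N)` with
`T(N) = 4/3 (N+1)(N+2)(4N+3) C(N) C(N+1) / 16^N`. Writing the Catalan numbers through central
binomial coefficients turns `T(N)` into `8/3 · (4N+3)/(N+1)` divided by the `N`-th Wallis
product, which tends to `π/2`; hence `T(N) → 64/(3π)`.
-/

open Real

open Filter Finset
open scoped Nat Topology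

section RatioTest

variable {𝕜 : Type*} [NormedField 𝕜] {a : ℕ → 𝕜} {L : ℝ}

theorem norm_mul_pow_succ_div_norm_mul_pow (a : ℕ → 𝕜) (z : 𝕜) (n : ℕ) :
    ‖a (n + 1) * z ^ (n + 1)‖ / ‖a n * z ^ n‖ = ‖a (n + 1)‖ / ‖a n‖ * ‖z‖ := by
  rcases eq_or_ne z 0 with rfl | hz
  · simp
  · have : ‖z‖ ^ n ≠ 0 := by positivity
    rw [norm_mul, norm_mul, norm_pow, norm_pow, pow_succ]
    field_simp

theorem summable_mul_pow_of_tendsto_ratio [CompleteSpace 𝕜] (ha : ∀ᶠ n in atTop, a n ≠ 0)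
    (h : Tendsto (fun n ↦ ‖a (n + 1)‖ / ‖a n‖) atTop (𝓝 L)) {z : 𝕜} (hz : L * ‖z‖ < 1) :
    Summable fun n ↦ a n * z ^ n := by
  rcases eq_or_ne z 0 with rfl | hz0
  · exact summable_of_ne_finset_zero (s := {0}) fun n hn ↦ by simp_all
  refine summable_of_ratio_test_tendsto_lt_one hz ?_ ?_
  · filter_upwards [ha] with n hn using mul_ne_zero hn (pow_ne_zero n hz0)
  · simpa only [norm_mul_pow_succ_div_norm_mul_pow] using h.mul_const ‖z‖

theorem not_summable_mul_pow_of_tendsto_ratio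
    (h : Tendsto (fun n ↦ ‖a (n + 1)‖ / ‖a n‖) atTop (𝓝 L)) {z : 𝕜} (hz : 1 < L * ‖z‖) :
    ¬ Summable fun n ↦ a n * z ^ n :=
  not_summable_of_ratio_test_tendsto_gt_one hz <| by
    simpa only [norm_mul_pow_succ_div_norm_mul_pow] using h.mul_const ‖z‖

end RatioTest

theorem catalan_pos (n : ℕ) : 0 < catalan n :=
  Nat.pos_of_mul_pos_left ((succ_mul_catalan_eq_centralBinom n).symm ▸ n.centralBinom_pos)

theorem succ_succ_mul_catalan_succ (n : ℕ) :
    ((n : ℝ) + 2) * catalan (n + 1) = 2 * (2 * n + 1) * catalan n := by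
  have e1 : ((n : ℝ) + 1) * (n + 1).centralBinom = 2 * (2 * n + 1) * n.centralBinom := by
    exact_mod_cast Nat.succ_mul_centralBinom_succ n
  have e2 : ((n : ℝ) + 1) * catalan n = n.centralBinom := by
    exact_mod_cast succ_mul_catalan_eq_centralBinom n
  have e3 : ((n : ℝ) + 2) * catalan (n + 1) = (n + 1).centralBinom := by
    exact_mod_cast succ_mul_catalan_eq_centralBinom (n + 1)
  apply mul_left_cancel₀ (show (n : ℝ) + 1 ≠ 0 by positivity)
  linear_combination e1 - 2 * (2 * (n : ℝ) + 1) * e2 + ((n : ℝ) + 1) * e3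

theorem tendsto_catalan_succ_div_catalan :
    Tendsto (fun n ↦ (catalan (n + 1) : ℝ) / catalan n) atTop (𝓝 4) := by
  have h (n : ℕ) : (catalan (n + 1) : ℝ) / catalan n = 4 - 6 * (1 / ((n + 1 : ℕ) + 1)) := by
    have hpos := (Nat.cast_pos (α := ℝ)).2 (catalan_pos n)
    push_cast
    field_simp
    linear_combination succ_succ_mul_catalan_succ n
  simp_rw [h]
  have h0 : Tendsto (fun n : ℕ ↦ 1 / (((n + 1 : ℕ) : ℝ) + 1)) atTop (𝓝 0) :=
    (tendsto_add_atTop_iff_nat 1).2 tendsto_one_div_add_atTop_nhds_zero_nat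
  simpa using tendsto_const_nhds.sub (h0.const_mul 6)

theorem tendsto_catalan_mul_catalan_succ_ratio :
    Tendsto (fun n ↦ ‖(catalan (n + 1) * catalan (n + 1 + 1) : ℝ)‖ /
      ‖(catalan n * catalan (n + 1) : ℝ)‖) atTop (𝓝 16) := by
  have h (n : ℕ) : ‖(catalan (n + 1) * catalan (n + 1 + 1) : ℝ)‖ /
      ‖(catalan n * catalan (n + 1) : ℝ)‖ =
      (catalan (n + 1 + 1) : ℝ) / catalan (n + 1) * ((catalan (n + 1) : ℝ) / catalan n) := by
    have := (Nat.cast_pos (α := ℝ)).2 (catalan_pos n)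
    have := (Nat.cast_pos (α := ℝ)).2 (catalan_pos (n + 1))
    simp only [norm_mul, Real.norm_natCast]
    field_simp
  simp_rw [h]
  rw [show (16 : ℝ) = 4 * 4 by norm_num]
  exact (tendsto_catalan_succ_div_catalan.comp (tendsto_add_atTop_nat 1)).mul
    tendsto_catalan_succ_div_catalan

noncomputable def catalanProductTail (N : ℕ) : ℝ :=
  4 / 3 * (N + 1) * (N + 2) * (4 * N + 3) * (catalan N * catalan (N + 1)) * (1 / 16) ^ N

theorem sum_range_catalan_mul_catalan_succ (N : ℕ) :
    ∑ n ∈ range N, (catalan n * catalan (n + 1) : ℝ) * (1 / 16) ^ n =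
      8 - catalanProductTail N := by
  induction N with
  | zero => norm_num [catalanProductTail]
  | succ N ih =>
    rw [sum_range_succ, ih, catalanProductTail, catalanProductTail]
    have R1 := succ_succ_mul_catalan_succ N
    have R2 := succ_succ_mul_catalan_succ (N + 1)
    push_cast at R1 R2 ⊢
    rw [pow_succ]
    linear_combination
      ((4 * (N : ℝ) + 7) * catalan (N + 1) * (1 / 16) ^ N / 12) *
        (2 * (2 * (N : ℝ) + 3) * R1 + ((N : ℝ) + 2) * R2)

theorem Real.Wallis.W_eq_centralBinom (n : ℕ) :
    Real.Wallis.W n = 16 ^ n / ((2 * n + 1) * n.centralBinom ^ 2) := by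
  have h : (n.centralBinom : ℝ) * n ! ^ 2 = (2 * n)! := by
    rw [Nat.centralBinom, ← Nat.choose_mul_factorial_mul_factorial (by omega : n ≤ 2 * n),
      show 2 * n - n = n by omega]
    push_cast
    ring
  have : (n ! : ℝ) ≠ 0 := by positivity
  rw [Real.Wallis.W_eq_factorial_ratio, ← h, pow_mul]
  field_simp
  ring

theorem catalanProductTail_eq_div_wallis (N : ℕ) :
    catalanProductTail N = 8 / 3 * ((4 * N + 3) / (N + 1)) / Real.Wallis.W N := by
  have hC : ((N : ℝ) + 1) * catalan N = N.centralBinom := by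
    exact_mod_cast succ_mul_catalan_eq_centralBinom N
  have hB : (N.centralBinom : ℝ) ≠ 0 := Nat.cast_ne_zero.2 N.centralBinom_pos.ne'
  rw [catalanProductTail, Real.Wallis.W_eq_centralBinom, ← hC, one_div_pow]
  field_simp
  linear_combination 4 * (catalan N : ℝ) * succ_succ_mul_catalan_succ N

theorem tendsto_catalanProductTail :
    Tendsto catalanProductTail atTop (𝓝 (64 / (3 * π))) := by
  have h (N : ℕ) : ((4 : ℝ) * N + 3) / (N + 1) = 4 - 1 / (N + 1) := by
    field_simp
    ring
  rw [funext catalanProductTail_eq_div_wallis]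
  simp_rw [h]
  have h4 : Tendsto (fun N : ℕ ↦ 4 - 1 / ((N : ℝ) + 1)) atTop (𝓝 (4 - 0)) :=
    tendsto_const_nhds.sub tendsto_one_div_add_atTop_nhds_zero_nat
  have := (h4.const_mul (8 / 3)).div Real.Wallis.tendsto_W_nhds_pi_div_two (by positivity)
  have hlim : 8 / 3 * (4 - 0) / (π / 2) = 64 / (3 * π) := by
    field_simp
    norm_num
  rwa [hlim] at this

theorem Mseries_radius_and_value :
    (∀ z : ℝ, |z| < 1 / 16 →
      Summable (fun n : ℕ => (catalan n * catalan (n + 1) : ℝ) * z ^ n)) ∧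
    (∀ z : ℝ, 1 / 16 < |z| →
      ¬ Summable (fun n : ℕ => (catalan n * catalan (n + 1) : ℝ) * z ^ n)) ∧
    HasSum (fun n : ℕ => (catalan n * catalan (n + 1) : ℝ) * (1 / 16) ^ n)
      (8 - 64 / (3 * π)) := by
  have hratio := tendsto_catalan_mul_catalan_succ_ratio
  refine ⟨fun z hz ↦ ?_, fun z hz ↦ ?_, ?_⟩
  · refine summable_mul_pow_of_tendsto_ratio (.of_forall fun n ↦ ?_) hratio ?_
    · have := catalan_pos n
      have := catalan_pos (n + 1)
      positivity
    · rw [Real.norm_eq_abs]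
      linarith
  · exact not_summable_mul_pow_of_tendsto_ratio hratio (by rw [Real.norm_eq_abs]; linarith)
  · rw [hasSum_iff_tendsto_nat_of_nonneg (fun n ↦ by positivity)]
    simp_rw [sum_range_catalan_mul_catalan_succ]
    exact tendsto_const_nhds.sub tendsto_catalanProductTail
end

section
/- The derivative series satisfies ∑_{n≥1} n * Catalan(n) * Catalan(n+1) / 16^{n-1} = 16 * (8*(10/(3π) - 1)), i.e., M'(1/16) = 128(10/(3π) - 1) where M(z) = ∑ Catalan(n)Catalan(n+1) z^n. -/
/-!
With `b n` the central binomial coefficient, Wallis' product satisfies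
`W n * b n ^ 2 * (2n + 1) = 16 ^ n`, so the `n`-th term of the series equals
`32 n / ((n + 1)² (n + 2) W n)`. These terms telescope: they are the increments of
`F n = 128 (5n + 3) / (3 (n + 1) W n)`, and `W n → π / 2` gives `F n → 1280 / (3π)`,
while `F 0 = 128`.
-/

open Real Filter Topology Real.Wallis

lemma hasSum_sub_of_monotone_of_tendsto {F : ℕ → ℝ} {L : ℝ} (hF : Monotone F)
    (hL : Tendsto F atTop (𝓝 L)) : HasSum (fun n ↦ F (n + 1) - F n) (L - F 0) := by
  rw [hasSum_iff_tendsto_nat_of_nonneg fun n ↦ sub_nonneg.2 (hF n.le_succ)]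
  simpa only [Finset.sum_range_sub] using hL.sub_const (F 0)

lemma Real.Wallis.W_mul_centralBinom_sq (n : ℕ) :
    W n * (n.centralBinom : ℝ) ^ 2 * (2 * n + 1) = 16 ^ n := by
  induction n with
  | zero => simp [W]
  | succ n ih =>
    have hb : ((n : ℝ) + 1) * (n + 1).centralBinom = 2 * (2 * n + 1) * n.centralBinom := by
      exact_mod_cast Nat.succ_mul_centralBinom_succ n
    have h2n : 2 * (n : ℝ) + 1 ≠ 0 := by positivity
    push_cast
    rw [W_succ, pow_succ (16 : ℝ) n, ← ih]
    field_simp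
    linear_combination 4 * W n * (2 * n + 3) *
      ((n + 1) * ((n + 1).centralBinom : ℝ) + 2 * (2 * n + 1) * n.centralBinom) * hb

lemma catalan_mul_catalan_succ_eq (n : ℕ) :
    (catalan n * catalan (n + 1) : ℝ) = 2 * 16 ^ n / ((n + 1) ^ 2 * (n + 2) * W n) := by
  have hc₀ : ((n : ℝ) + 1) * catalan n = n.centralBinom := by
    exact_mod_cast succ_mul_catalan_eq_centralBinom n
  have hc₁ : ((n : ℝ) + 2) * catalan (n + 1) = (n + 1).centralBinom := by
    exact_mod_cast succ_mul_catalan_eq_centralBinom (n + 1)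
  have hb : ((n : ℝ) + 1) * (n + 1).centralBinom = 2 * (2 * n + 1) * n.centralBinom := by
    exact_mod_cast Nat.succ_mul_centralBinom_succ n
  have hW := W_mul_centralBinom_sq n
  have hW₀ := W_pos n
  rw [eq_div_iff (by positivity)]
  linear_combination (n + 1) * W n * ((n + 2) * (catalan (n + 1) : ℝ) * hc₀ + n.centralBinom * hc₁)
    + W n * n.centralBinom * hb + 2 * hW

lemma mul_catalan_mul_catalan_succ_div_eq (n : ℕ) :
    (n : ℝ) * (catalan n * catalan (n + 1) : ℝ) / 16 ^ (n - 1) =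
      32 * n / ((n + 1) ^ 2 * (n + 2) * W n) := by
  rcases n with _ | n
  · simp
  · rw [catalan_mul_catalan_succ_eq, Nat.add_sub_cancel, pow_succ]
    field_simp
    ring

noncomputable def wallisPrimitive (n : ℕ) : ℝ := 128 * (5 * n + 3) / (3 * (n + 1) * W n)

lemma wallisPrimitive_succ_sub (n : ℕ) :
    wallisPrimitive (n + 1) - wallisPrimitive n = 32 * n / ((n + 1) ^ 2 * (n + 2) * W n) := by
  have hW := W_pos n
  rw [wallisPrimitive, wallisPrimitive, W_succ]
  push_cast
  field_simp
  ring

lemma wallisPrimitive_monotone : Monotone wallisPrimitive :=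
  monotone_nat_of_le_succ fun n ↦ sub_nonneg.1 <| by
    rw [wallisPrimitive_succ_sub]
    have := W_pos n
    positivity

lemma wallisPrimitive_zero : wallisPrimitive 0 = 128 := by
  simp [wallisPrimitive, W]

lemma tendsto_wallisPrimitive : Tendsto wallisPrimitive atTop (𝓝 (1280 / (3 * π))) := by
  have hratio := tendsto_add_mul_div_add_mul_atTop_nhds (3 : ℝ) 1 5 one_ne_zero
  have hW := tendsto_W_nhds_pi_div_two.inv₀ (by positivity)
  convert (hratio.const_mul (128 / 3)).mul hW using 2 with n
  · have := W_pos n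
    rw [wallisPrimitive]
    field_simp
    ring
  · field_simp
    norm_num

theorem Mseries_deriv_value :
    HasSum (fun n : ℕ =>
      (n : ℝ) * (catalan n * catalan (n + 1) : ℝ) / 16 ^ (n - 1))
      (128 * (10 / (3 * π) - 1)) := by
  have h := hasSum_sub_of_monotone_of_tendsto wallisPrimitive_monotone tendsto_wallisPrimitive
  simp only [wallisPrimitive_succ_sub, wallisPrimitive_zero] at h
  simp only [mul_catalan_mul_catalan_succ_div_eq]
  convert h using 1
  field_simp
  ring
end

section
/- The formal power series A(y) with A(0) = 0 satisfying A(y)^3 + (y+1)A(y)^2 + (2y-1)A(y) + y = 0 exists, is unique, and has nonnegative integer coefficients. -/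
open PowerSeries

/-! The substitution `A = X * B` turns the equation into the fixed-point problem
`B = 1 + X * (2 * B + (X + 1) * B ^ 2 + X * B ^ 3)`, whose right-hand side is a contraction for
the `X`-adic metric. So the fixed point is unique and is the coefficientwise limit of the iterates
starting at `0`; these iterates are computed by the same formula over `ℕ`, hence have
nonnegative integer coefficients, and so has the limit. -/

namespace PowerSeries

section Contraction

variable {R : Type*} [CommRing R] {G : R⟦X⟧ → R⟦X⟧}

theorem X_pow_dvd_iterate_sub (hG : ∀ A B, X * (A - B) ∣ G A - G B) (m : ℕ) (A B : R⟦X⟧) :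
    X ^ m ∣ G^[m] A - G^[m] B := by
  induction m with
  | zero => simp
  | succ m ih =>
    rw [Function.iterate_succ_apply', Function.iterate_succ_apply', pow_succ']
    exact (mul_dvd_mul_left X ih).trans (hG _ _)

theorem coeff_eq_coeff_iterate_of_isFixedPt (hG : ∀ A B, X * (A - B) ∣ G A - G B)
    {A : R⟦X⟧} (hA : Function.IsFixedPt G A) (n : ℕ) (B : R⟦X⟧) :
    coeff n A = coeff n (G^[n + 1] B) := by
  have hdvd := X_pow_dvd_iterate_sub hG (n + 1) A B
  rw [(hA.iterate (n + 1)).eq] at hdvd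
  exact sub_eq_zero.mp <| by simpa using X_pow_dvd_iff.mp hdvd n n.lt_succ_self

theorem existsUnique_isFixedPt (hG : ∀ A B, X * (A - B) ∣ G A - G B) :
    ∃! A : R⟦X⟧, Function.IsFixedPt G A := by
  set A := mk fun n ↦ coeff n (G^[n + 1] 0)
  have hA : ∀ n, X ^ n ∣ A - G^[n] 0 := fun n ↦ X_pow_dvd_iff.mpr fun k hk ↦ by
    obtain ⟨j, rfl⟩ := Nat.exists_eq_add_of_lt hk
    have := X_pow_dvd_iff.mp (X_pow_dvd_iterate_sub hG (k + 1) 0 (G^[j] 0)) k k.lt_succ_self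
    rw [← Function.iterate_add_apply, show k + 1 + j = k + j + 1 by omega] at this
    simpa [A, sub_eq_zero] using this
  refine ⟨A, ?_, fun B hB ↦ ?_⟩
  · ext n
    have hstep : X ^ (n + 1) ∣ G A - G^[n + 1] 0 := by
      rw [Function.iterate_succ_apply', pow_succ']
      exact (mul_dvd_mul_left X (hA n)).trans (hG _ _)
    have := X_pow_dvd_iff.mp hstep n n.lt_succ_self
    simpa [A, sub_eq_zero] using this
  · ext n
    simp [A, coeff_eq_coeff_iterate_of_isFixedPt hG hB n 0]

end Contraction

end PowerSeries

noncomputable def seriesParallelStep {R : Type*} [CommSemiring R] (B : R⟦X⟧) : R⟦X⟧ :=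
  1 + X * (2 * B + (X + 1) * B ^ 2 + X * B ^ 3)

theorem map_seriesParallelStep {R S : Type*} [CommSemiring R] [CommSemiring S] (f : R →+* S)
    (B : R⟦X⟧) : map f (seriesParallelStep B) = seriesParallelStep (map f B) := by
  simp [seriesParallelStep, map_ofNat]

theorem X_mul_sub_dvd_seriesParallelStep_sub {R : Type*} [CommRing R] (B C : R⟦X⟧) :
    X * (B - C) ∣ seriesParallelStep B - seriesParallelStep C :=
  ⟨2 + (X + 1) * (B + C) + X * (B ^ 2 + B * C + C ^ 2), by unfold seriesParallelStep; ring⟩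

theorem cubic_X_mul_eq_zero_iff {R : Type*} [CommRing R] (B : R⟦X⟧) :
    (X * B) ^ 3 + (X + 1) * (X * B) ^ 2 + (2 * X - 1) * (X * B) + X = 0 ↔
      Function.IsFixedPt seriesParallelStep B := by
  have hfactor : (X * B) ^ 3 + (X + 1) * (X * B) ^ 2 + (2 * X - 1) * (X * B) + X =
      X * (seriesParallelStep B - B) := by
    unfold seriesParallelStep; ring
  rw [hfactor, Function.IsFixedPt, ← sub_eq_zero (a := seriesParallelStep B)]
  exact X_mul_injective.eq_iff' (mul_zero (X : R⟦X⟧))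

theorem exists_isFixedPt_of_cubic_eq_zero {R : Type*} [CommRing R] {A : R⟦X⟧}
    (h0 : constantCoeff A = 0) (hA : A ^ 3 + (X + 1) * A ^ 2 + (2 * X - 1) * A + X = 0) :
    ∃ B, Function.IsFixedPt seriesParallelStep B ∧ A = X * B := by
  obtain ⟨B, rfl⟩ := X_dvd_iff.mpr h0
  exact ⟨B, (cubic_X_mul_eq_zero_iff B).mp hA, rfl⟩

theorem exists_coeff_eq_natCast_of_isFixedPt {R : Type*} [CommRing R] {B : R⟦X⟧}
    (hB : Function.IsFixedPt seriesParallelStep B) (n : ℕ) :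
    ∃ a : ℕ, coeff n B = (a : R) := by
  have hsemiconj : Function.Semiconj (map (Nat.castRingHom R)) seriesParallelStep
      seriesParallelStep := map_seriesParallelStep _
  refine ⟨coeff n (seriesParallelStep^[n + 1] 0), ?_⟩
  rw [coeff_eq_coeff_iterate_of_isFixedPt X_mul_sub_dvd_seriesParallelStep_sub hB n 0,
    ← map_zero (map (Nat.castRingHom R)), ← (hsemiconj.iterate_right (n + 1)).eq]
  simp

/-- The algebraic equation `A³ + (y+1)A² + (2y-1)A + y = 0` with `A(0) = 0` has a
unique formal power series solution, and its coefficients are nonnegative integers. -/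
theorem seriesParallel_algebraic :
    (∃! A : PowerSeries ℚ, PowerSeries.constantCoeff A = 0 ∧
        A ^ 3 + (X + 1) * A ^ 2 + (2 * X - 1) * A + X = 0) ∧
    (∀ A : PowerSeries ℚ, PowerSeries.constantCoeff A = 0 →
        A ^ 3 + (X + 1) * A ^ 2 + (2 * X - 1) * A + X = 0 →
        ∀ n : ℕ, ∃ a : ℕ, PowerSeries.coeff n A = (a : ℚ)) := by
  obtain ⟨B, hB, huniq⟩ := existsUnique_isFixedPt (R := ℚ) X_mul_sub_dvd_seriesParallelStep_sub
  refine ⟨⟨X * B, ⟨by simp, (cubic_X_mul_eq_zero_iff B).mpr hB⟩, ?_⟩, ?_⟩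
  · rintro A ⟨h0, hA⟩
    obtain ⟨C, hC, rfl⟩ := exists_isFixedPt_of_cubic_eq_zero h0 hA
    rw [huniq C hC]
  · rintro A h0 hA (_ | n)
    · exact ⟨0, by simpa using h0⟩
    · obtain ⟨C, hC, rfl⟩ := exists_isFixedPt_of_cubic_eq_zero h0 hA
      simpa using exists_coeff_eq_natCast_of_isFixedPt hC n
end

section
/- The polynomial 4y^3 - 24y^2 + 48y - 5 has a unique real root in the interval (0,1), and this root equals 2 - 3·2^{-2/3}. -/
theorem rhoA_root :
    (2 - 3 * (2 : ℝ) ^ (-(2 / 3) : ℝ)) ∈ Set.Ioo (0 : ℝ) 1 ∧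
    4 * (2 - 3 * (2 : ℝ) ^ (-(2 / 3) : ℝ)) ^ 3
      - 24 * (2 - 3 * (2 : ℝ) ^ (-(2 / 3) : ℝ)) ^ 2
      + 48 * (2 - 3 * (2 : ℝ) ^ (-(2 / 3) : ℝ)) - 5 = 0 ∧
    ∀ y ∈ Set.Ioo (0 : ℝ) 1,
      4 * y ^ 3 - 24 * y ^ 2 + 48 * y - 5 = 0 →
      y = 2 - 3 * (2 : ℝ) ^ (-(2 / 3) : ℝ) := by
  set c : ℝ := (2 : ℝ) ^ (-(2 / 3) : ℝ) with hc
  have hcpos : 0 < c := Real.rpow_pos_of_pos (by norm_num) _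
  have hc3 : c ^ 3 = 1 / 4 := by
    rw [hc, ← Real.rpow_natCast ((2:ℝ) ^ (-(2/3):ℝ)) 3, ← Real.rpow_mul (by norm_num : (0:ℝ) ≤ 2)]
    norm_num
  have h1 : 1 / 3 < c := by
    have : (1/3 : ℝ) ^ 3 < c ^ 3 := by rw [hc3]; norm_num
    exact lt_of_pow_lt_pow_left₀ 3 hcpos.le this
  have h2 : c < 2 / 3 := by
    have : c ^ 3 < (2/3 : ℝ) ^ 3 := by rw [hc3]; norm_num
    exact lt_of_pow_lt_pow_left₀ 3 (by norm_num) this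
  refine ⟨⟨by linarith, by linarith⟩, by linear_combination (-108 : ℝ) * hc3, ?_⟩
  intro y _ hy
  have hcube : (y - 2) ^ 3 = (2 - 3 * c - 2) ^ 3 := by
    have : (2 - 3*c - 2)^3 = -27 * c^3 := by ring
    rw [this, hc3]
    linarith [hy]
  have := (Odd.strictMono_pow (R := ℝ) (⟨1, by norm_num⟩ : Odd 3)).injective hcube
  linarith
end
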